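/- Let l ≥ 5 be a prime and F a field such that the l-th cyclotomic polynomial Φ_l(X) is irreducible in F[x]. Assume the standing factorization hypothesis, assume that the formal derivative f′ ≠ 0 or g′ ≠ 0, assume 2 ≤ n ≤ (l² − 4l + 1)/2, and assume in addition that for each i = 1,…,n there is an integer m_i with 1 ≤ m_i ≤ l−1 such that Φ_l(a_i x + b_i, c_i x + d_i) divides f·(c_i x + d_i)^{m_i} − g·(a_i x + b_i)^{m_i} in F[x]. Then l ≤ 2n + 1. -/

import Mathlib

/-!
Suppose `l ≥ 2n + 3` and put `D = max (deg f) (deg g)`; as `l` is odd, either `l ≤ 2D + 1` or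
`l ≥ 2D + 3`.

In the first case the Mason–Stothers theorem for `f^l + (-g^l) = f^l - g^l` gives
`lD < deg f + deg g + deg rad (f^l - g^l)`. Since `f^l - g^l = (f - g) Φ_l(f, g)`, the
factorization bounds that radical by `deg (f - g) + deg Ψ + n(l - 1)`, and together with the degree
count `(l - 1) D = l deg Ψ + (l - 1) ∑ r_i` this contradicts `2n + 3 ≤ l ≤ 2D + 1`.

In the second case, with `u = a x + b` and `v = c x + d`, either `f v^m - g u^m` or its companion
`f u^(l-m) - g v^(l-m)` has degree below `l - 1 = deg Φ_l(u, v)` and is divisible by `Φ_l(u, v)`,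
hence vanishes. By coprimality `(f, g)` is then a scalar multiple of `(u^D, v^D)` or `(v^D, u^D)`.
Two different indices give two such descriptions of `(f, g)`, and comparing them shows that the
corresponding matrices are not essentially distinct.
-/

open Polynomial

/-- The homogenized cyclotomic polynomial `Φ_l(f,g) = ∑_{j=0}^{l-1} f^j g^{l-1-j}`. -/
noncomputable def PhiH {F : Type*} [Field F] (l : ℕ) (f g : Polynomial F) : Polynomial F :=
  ∑ j ∈ Finset.range l, f ^ j * g ^ (l - 1 - j)

/-- Two (invertible) matrices `(a₁,b₁;c₁,d₁)` and `(a₂,b₂;c₂,d₂)` are *essentially distinct*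
if there are no `α ∈ F*` and root of unity `μ ∈ F` with
`(a₂,b₂;c₂,d₂) = α·(μa₁,μb₁;c₁,d₁)` or `(a₂,b₂;c₂,d₂) = α·(μc₁,μd₁;a₁,b₁)`. -/
def EssDistinct {F : Type*} [Field F] (a₁ b₁ c₁ d₁ a₂ b₂ c₂ d₂ : F) : Prop :=
  ¬ ∃ (α μ : F) (k : ℕ), α ≠ 0 ∧ 0 < k ∧ μ ^ k = 1 ∧
      ((a₂ = α * (μ * a₁) ∧ b₂ = α * (μ * b₁) ∧ c₂ = α * c₁ ∧ d₂ = α * d₁) ∨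
       (a₂ = α * (μ * c₁) ∧ b₂ = α * (μ * d₁) ∧ c₂ = α * a₁ ∧ d₂ = α * b₁))

open Finset UniqueFactorizationMonoid UniqueFactorizationDomain

section

variable {F : Type*} [Field F]

theorem PhiH_mul_sub (l : ℕ) (f g : F[X]) : PhiH l f g * (f - g) = f ^ l - g ^ l :=
  geom_sum₂_mul f g l

theorem PhiH_succ (l : ℕ) (f g : F[X]) : PhiH (l + 1) f g = f ^ l + g * PhiH l f g := by
  simpa only [PhiH, Nat.add_sub_cancel] using geom_sum₂_succ_eq f g

theorem isCoprime_PhiH_right {l : ℕ} (hl : l ≠ 0) {u v : F[X]} (huv : IsCoprime u v) :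
    IsCoprime (PhiH l u v) v := by
  obtain ⟨k, rfl⟩ := Nat.exists_eq_succ_of_ne_zero hl
  rw [PhiH_succ]
  exact huv.pow_left.add_mul_left_left _

theorem natDegree_geom_sum_X (l : ℕ) : (∑ i ∈ range l, (X : F[X]) ^ i).natDegree = l - 1 := by
  rcases Nat.eq_zero_or_pos l with rfl | hl
  · simp
  have h : (∑ i ∈ range l, (X : F[X]) ^ i) * (X - C 1) = X ^ l - C 1 := by
    simpa using geom_sum_mul (X : F[X]) l
  have hsum : ∑ i ∈ range l, (X : F[X]) ^ i ≠ 0 :=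
    left_ne_zero_of_mul (h ▸ X_pow_sub_C_ne_zero hl 1)
  have := congrArg natDegree h
  rw [natDegree_mul hsum (X_sub_C_ne_zero 1), natDegree_X_sub_C, natDegree_X_pow_sub_C] at this
  omega

theorem geom_sum_ne_zero_of_irreducible {l : ℕ} (hl : 3 ≤ l)
    (hirr : Irreducible (∑ i ∈ range l, (X : F[X]) ^ i)) (t : F) :
    ∑ i ∈ range l, t ^ i ≠ 0 := by
  have := hirr.not_isRoot_of_natDegree_ne_one (by rw [natDegree_geom_sum_X]; omega) (x := t)
  simpa [IsRoot, eval_geom_sum] using this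

theorem geom_sum₂_ne_zero_of_right_ne_zero {l : ℕ} (hΦ : ∀ t : F, ∑ i ∈ range l, t ^ i ≠ 0)
    (x : F) {y : F} (hy : y ≠ 0) :
    ∑ i ∈ range l, x ^ i * y ^ (l - 1 - i) ≠ 0 := by
  have : ∑ i ∈ range l, x ^ i * y ^ (l - 1 - i) = y ^ (l - 1) * ∑ i ∈ range l, (x / y) ^ i := by
    rw [mul_sum]
    refine sum_congr rfl fun i hi => ?_
    rw [div_pow, pow_sub₀ _ hy (by rw [mem_range] at hi; omega)]
    field_simp
  rw [this]
  exact mul_ne_zero (pow_ne_zero _ hy) (hΦ _)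

theorem geom_sum₂_ne_zero {l : ℕ} (hΦ : ∀ t : F, ∑ i ∈ range l, t ^ i ≠ 0) {x y : F}
    (h : x ≠ 0 ∨ y ≠ 0) :
    ∑ i ∈ range l, x ^ i * y ^ (l - 1 - i) ≠ 0 := by
  rcases h with hx | hy
  · rw [geom_sum₂_comm]
    exact geom_sum₂_ne_zero_of_right_ne_zero hΦ y hx
  · exact geom_sum₂_ne_zero_of_right_ne_zero hΦ x hy

/-- In degree `(l - 1) D` the coefficient of `Φ_l(f, g)` is the homogenized `Φ_l` at the
degree-`D` coefficients of `f` and `g`; it is nonzero because `Φ_l` has no root in `F`. -/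
theorem natDegree_PhiH {l : ℕ} (hΦ : ∀ t : F, ∑ i ∈ range l, t ^ i ≠ 0) {f g : F[X]}
    (hf : f ≠ 0) (hg : g ≠ 0) :
    (PhiH l f g).natDegree = (l - 1) * max f.natDegree g.natDegree := by
  set D := max f.natDegree g.natDegree
  have hfD : f.natDegree ≤ D := le_max_left _ _
  have hgD : g.natDegree ≤ D := le_max_right _ _
  have hsplit : ∀ j ∈ range l, (l - 1) * D = j * D + (l - 1 - j) * D := fun j hj => by
    rw [← add_mul, Nat.add_sub_of_le (by rw [mem_range] at hj; omega)]
  have hcoeff : (PhiH l f g).coeff ((l - 1) * D) =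
      ∑ j ∈ range l, f.coeff D ^ j * g.coeff D ^ (l - 1 - j) := by
    rw [PhiH, finsetSum_coeff]
    refine sum_congr rfl fun j hj => ?_
    rw [hsplit j hj, coeff_mul_add_eq_of_natDegree_le (natDegree_pow_le_of_le j hfD)
      (natDegree_pow_le_of_le _ hgD), coeff_pow_of_natDegree_le hfD, coeff_pow_of_natDegree_le hgD]
  have hlead : f.coeff D ≠ 0 ∨ g.coeff D ≠ 0 := by
    rcases le_total g.natDegree f.natDegree with h | h
    · left
      rw [show D = f.natDegree from max_eq_left h]
      exact leadingCoeff_ne_zero.mpr hf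
    · right
      rw [show D = g.natDegree from max_eq_right h]
      exact leadingCoeff_ne_zero.mpr hg
  refine le_antisymm (natDegree_sum_le_of_forall_le _ _ fun j hj => ?_)
    (le_natDegree_of_ne_zero (hcoeff ▸ geom_sum₂_ne_zero hΦ hlead))
  rw [hsplit j hj]
  exact natDegree_mul_le_of_le (natDegree_pow_le_of_le j hfD) (natDegree_pow_le_of_le _ hgD)

section LinearForms

variable {a b c d : F}

theorem det_swap_ne_zero (hdet : a * d - b * c ≠ 0) : c * b - d * a ≠ 0 :=
  fun h => hdet (by linear_combination -h)

theorem linear_ne_zero (hdet : a * d - b * c ≠ 0) : C a * X + C b ≠ 0 := by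
  intro h
  have ha : a = 0 := by simpa using congrArg (coeff · 1) h
  have hb : b = 0 := by simpa using congrArg (coeff · 0) h
  exact hdet (by simp [ha, hb])

theorem isCoprime_linear (hdet : a * d - b * c ≠ 0) :
    IsCoprime (C a * X + C b) (C c * X + C d) := by
  have h : C a * (C c * X + C d) - C c * (C a * X + C b) = C (a * d - b * c) := by
    simp only [C_sub, C_mul]
    ring
  refine ⟨-(C (a * d - b * c)⁻¹ * C c), C (a * d - b * c)⁻¹ * C a, ?_⟩
  calc _ = C (a * d - b * c)⁻¹ * (C a * (C c * X + C d) - C c * (C a * X + C b)) := by ring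
    _ = 1 := by rw [h, ← C_mul, inv_mul_cancel₀ hdet, C_1]

theorem max_natDegree_linear (hdet : a * d - b * c ≠ 0) :
    max (C a * X + C b).natDegree (C c * X + C d).natDegree = 1 := by
  rcases eq_or_ne a 0 with rfl | ha
  · have hc : c ≠ 0 := by rintro rfl; simp at hdet
    rw [natDegree_linear hc]
    exact max_eq_right natDegree_linear_le
  · rw [natDegree_linear ha]
    exact max_eq_left natDegree_linear_le

theorem natDegree_PhiH_linear {l : ℕ} (hΦ : ∀ t : F, ∑ i ∈ range l, t ^ i ≠ 0)
    (hdet : a * d - b * c ≠ 0) :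
    (PhiH l (C a * X + C b) (C c * X + C d)).natDegree = l - 1 := by
  rw [natDegree_PhiH hΦ (linear_ne_zero hdet) (linear_ne_zero (det_swap_ne_zero hdet)),
    max_natDegree_linear hdet, mul_one]

theorem C_mul_X_add_C_eq_C_mul_iff {p q p' q' δ : F} :
    C p * X + C q = C δ * (C p' * X + C q') ↔ p = δ * p' ∧ q = δ * q' := by
  constructor
  · intro h
    exact ⟨by simpa using congrArg (coeff · 1) h, by simpa using congrArg (coeff · 0) h⟩
  · rintro ⟨rfl, rfl⟩
    simp only [C_mul]
    ring

end LinearForms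

theorem exists_eq_C_mul_of_pow_eq_C_mul_pow {p q : F[X]} {γ : F} {D : ℕ} (hD : D ≠ 0)
    (hq : q ≠ 0) (h : p ^ D = C γ * q ^ D) : ∃ δ : F, p = C δ * q ∧ δ ^ D = γ := by
  obtain ⟨r, rfl⟩ : q ∣ p := (pow_dvd_pow_iff_dvd hD).mp ⟨C γ, by rw [h, mul_comm]⟩
  have hr : r ^ D = C γ :=
    mul_left_cancel₀ (pow_ne_zero D hq) (by rw [← mul_pow, h, mul_comm])
  have hr₀ : r.natDegree = 0 := by
    simpa [hD] using congrArg natDegree hr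
  refine ⟨r.coeff 0, by rw [mul_comm, ← eq_C_of_natDegree_eq_zero hr₀], C_injective ?_⟩
  rw [C_pow, ← eq_C_of_natDegree_eq_zero hr₀, hr]

def IsScaledPowPair (D : ℕ) (x y f g : F[X]) : Prop :=
  ∃ β : F, β ≠ 0 ∧ f = C β * x ^ D ∧ g = C β * y ^ D

namespace IsScaledPowPair

variable {D : ℕ} {x y f g : F[X]}

theorem swap (h : IsScaledPowPair D x y f g) : IsScaledPowPair D y x g f :=
  let ⟨β, hβ, hf, hg⟩ := h
  ⟨β, hβ, hg, hf⟩

theorem of_mul_pow_eq (hfg : IsCoprime f g) (hxy : IsCoprime x y) (hx : x ≠ 0)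
    (h : f * y ^ D = g * x ^ D) : IsScaledPowPair D x y f g := by
  have hxf : x ^ D ∣ f := hxy.pow.dvd_of_dvd_mul_right ⟨g, by rw [h, mul_comm]⟩
  have hfx : f ∣ x ^ D := hfg.dvd_of_dvd_mul_left ⟨y ^ D, by rw [← h, mul_comm]⟩
  obtain ⟨w, hw⟩ := associated_of_dvd_dvd hxf hfx
  obtain ⟨β, hβ, hβw⟩ := Polynomial.isUnit_iff.mp w.isUnit
  refine ⟨β, hβ.ne_zero, by rw [← hw, hβw, mul_comm], ?_⟩
  apply mul_right_cancel₀ (pow_ne_zero D hx)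
  rw [← h, ← hw, hβw]
  ring

theorem max_natDegree (h : IsScaledPowPair D x y f g) :
    max f.natDegree g.natDegree = D * max x.natDegree y.natDegree := by
  obtain ⟨β, hβ, rfl, rfl⟩ := h
  rw [natDegree_C_mul hβ, natDegree_C_mul hβ, natDegree_pow, natDegree_pow, Nat.mul_max_mul_left]

theorem of_dvd {P : F[X]} (hfg : IsCoprime f g) (hxy : IsCoprime x y) (hx : x ≠ 0)
    (hxy_deg : max x.natDegree y.natDegree = 1) (hdvd : P ∣ f * y ^ D - g * x ^ D)
    (hlt : max f.natDegree g.natDegree + D < P.natDegree) :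
    IsScaledPowPair (max f.natDegree g.natDegree) x y f g := by
  have hpow : ∀ z : F[X], z.natDegree ≤ 1 → (z ^ D).natDegree ≤ D := fun z hz =>
    (natDegree_pow_le_of_le D hz).trans (mul_one D).le
  have hx₁ := hpow x (le_max_left _ _ |>.trans hxy_deg.le)
  have hy₁ := hpow y (le_max_right _ _ |>.trans hxy_deg.le)
  have hdeg : (f * y ^ D - g * x ^ D).natDegree ≤ max f.natDegree g.natDegree + D :=
    (natDegree_sub_le_of_le (natDegree_mul_le_of_le (le_max_left _ _) hy₁)
      (natDegree_mul_le_of_le (le_max_right _ _) hx₁)).trans (max_self _).le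
  have h := of_mul_pow_eq hfg hxy hx
    (sub_eq_zero.mp (eq_zero_of_dvd_of_natDegree_lt hdvd (hdeg.trans_lt hlt)))
  rwa [h.max_natDegree, hxy_deg, mul_one]

theorem exists_eq_C_mul (hD : D ≠ 0) {x₀ y₀ x₁ y₁ : F[X]}
    (h₀ : IsScaledPowPair D x₀ y₀ f g) (h₁ : IsScaledPowPair D x₁ y₁ f g)
    (hx₀ : x₀ ≠ 0) (hy₀ : y₀ ≠ 0) :
    ∃ α μ : F, α ≠ 0 ∧ μ ^ D = 1 ∧ x₁ = C (α * μ) * x₀ ∧ y₁ = C α * y₀ := by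
  obtain ⟨β₀, hβ₀, rfl, rfl⟩ := h₀
  obtain ⟨β₁, hβ₁, hf, hg⟩ := h₁
  have hγ : β₀ / β₁ ≠ 0 := div_ne_zero hβ₀ hβ₁
  have root : ∀ {w₀ w₁ : F[X]}, w₀ ≠ 0 → C β₀ * w₀ ^ D = C β₁ * w₁ ^ D →
      ∃ δ : F, w₁ = C δ * w₀ ∧ δ ^ D = β₀ / β₁ := fun hw h =>
    exists_eq_C_mul_of_pow_eq_C_mul_pow hD hw <| mul_left_cancel₀ (C_ne_zero.mpr hβ₁) <| by
      rw [← h, ← mul_assoc, ← C_mul, mul_div_cancel₀ _ hβ₁]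
  obtain ⟨δ, hx, hδ⟩ := root hx₀ hf
  obtain ⟨δ', hy, hδ'⟩ := root hy₀ hg
  have hδ'₀ : δ' ≠ 0 := by
    rintro rfl
    exact hγ (by rw [← hδ', zero_pow hD])
  refine ⟨δ', δ / δ', hδ'₀, ?_, by rwa [mul_div_cancel₀ _ hδ'₀], hy⟩
  rw [div_pow, hδ, hδ', div_self hγ]

end IsScaledPowPair

theorem isScaledPowPair_of_PhiH_dvd {l m : ℕ} (hΦ : ∀ t : F, ∑ i ∈ range l, t ^ i ≠ 0)
    {a b c d : F} (hdet : a * d - b * c ≠ 0) {f g : F[X]} (hfg : IsCoprime f g) (hm : m ≤ l - 1)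
    (hl : 2 * max f.natDegree g.natDegree + 3 ≤ l)
    (hdvd : PhiH l (C a * X + C b) (C c * X + C d) ∣
      f * (C c * X + C d) ^ m - g * (C a * X + C b) ^ m) :
    IsScaledPowPair (max f.natDegree g.natDegree) (C a * X + C b) (C c * X + C d) f g ∨
      IsScaledPowPair (max f.natDegree g.natDegree) (C c * X + C d) (C a * X + C b) f g := by
  set u := C a * X + C b
  set v := C c * X + C d
  have hP : (PhiH l u v).natDegree = l - 1 := natDegree_PhiH_linear hΦ hdet
  have huv : IsCoprime u v := isCoprime_linear hdet
  by_cases hsmall : max f.natDegree g.natDegree + m < l - 1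
  · exact .inl <|
      .of_dvd hfg huv (linear_ne_zero hdet) (max_natDegree_linear hdet) hdvd (hP ▸ hsmall)
  -- Otherwise `m` is large, and since `Φ_l(u, v) ∣ u^l - v^l` is coprime to `v`, the divisibility
  -- passes to `f u^(l-m) - g v^(l-m)`, whose degree is small.
  have hdvd' : PhiH l u v ∣ f * u ^ (l - m) - g * v ^ (l - m) := by
    have hid : v ^ m * (f * u ^ (l - m) - g * v ^ (l - m)) =
        u ^ (l - m) * (f * v ^ m - g * u ^ m) + g * (PhiH l u v * (u - v)) := by
      obtain ⟨k, rfl⟩ : ∃ k, l = m + k := ⟨l - m, by omega⟩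
      rw [PhiH_mul_sub, Nat.add_sub_cancel_left, pow_add, pow_add]
      ring
    refine ((isCoprime_PhiH_right (by omega) huv).pow_right (n := m)).dvd_of_dvd_mul_left ?_
    rw [hid]
    exact dvd_add (hdvd.mul_left _) ((dvd_mul_right _ _).mul_left g)
  exact .inr (.of_dvd hfg huv.symm (linear_ne_zero (det_swap_ne_zero hdet))
    (by rw [max_comm]; exact max_natDegree_linear hdet) hdvd' (by omega))

theorem exists_ess_eq_of_isScaledPowPair {D : ℕ} (hD : D ≠ 0) {p₀ q₀ r₀ s₀ p₁ q₁ r₁ s₁ : F}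
    {f g : F[X]} (hx₀ : C p₀ * X + C q₀ ≠ 0) (hy₀ : C r₀ * X + C s₀ ≠ 0)
    (h₀ : IsScaledPowPair D (C p₀ * X + C q₀) (C r₀ * X + C s₀) f g)
    (h₁ : IsScaledPowPair D (C p₁ * X + C q₁) (C r₁ * X + C s₁) f g) :
    ∃ (α μ : F) (k : ℕ), α ≠ 0 ∧ 0 < k ∧ μ ^ k = 1 ∧
      p₁ = α * (μ * p₀) ∧ q₁ = α * (μ * q₀) ∧ r₁ = α * r₀ ∧ s₁ = α * s₀ := by
  obtain ⟨α, μ, hα, hμ, hx, hy⟩ := h₀.exists_eq_C_mul hD h₁ hx₀ hy₀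
  rw [C_mul_X_add_C_eq_C_mul_iff, mul_assoc, mul_assoc] at hx
  rw [C_mul_X_add_C_eq_C_mul_iff] at hy
  exact ⟨α, μ, D, hα, Nat.pos_of_ne_zero hD, hμ, hx.1, hx.2, hy.1, hy.2⟩

theorem not_essDistinct_of_isScaledPowPair {D : ℕ} (hD : D ≠ 0)
    {a₀ b₀ c₀ d₀ a₁ b₁ c₁ d₁ : F} (hdet₀ : a₀ * d₀ - b₀ * c₀ ≠ 0) {f g : F[X]}
    (h₀ : IsScaledPowPair D (C a₀ * X + C b₀) (C c₀ * X + C d₀) f g ∨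
      IsScaledPowPair D (C c₀ * X + C d₀) (C a₀ * X + C b₀) f g)
    (h₁ : IsScaledPowPair D (C a₁ * X + C b₁) (C c₁ * X + C d₁) f g ∨
      IsScaledPowPair D (C c₁ * X + C d₁) (C a₁ * X + C b₁) f g) :
    ¬ EssDistinct a₀ b₀ c₀ d₀ a₁ b₁ c₁ d₁ := by
  have hu := linear_ne_zero hdet₀
  have hv := linear_ne_zero (det_swap_ne_zero hdet₀)
  rw [EssDistinct, not_not]
  rcases h₀ with h₀ | h₀ <;> rcases h₁ with h₁ | h₁
  · obtain ⟨α, μ, k, hα, hk, hμ, e⟩ := exists_ess_eq_of_isScaledPowPair hD hu hv h₀ h₁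
    exact ⟨α, μ, k, hα, hk, hμ, .inl e⟩
  · obtain ⟨α, μ, k, hα, hk, hμ, e⟩ := exists_ess_eq_of_isScaledPowPair hD hv hu h₀.swap h₁.swap
    exact ⟨α, μ, k, hα, hk, hμ, .inr e⟩
  · obtain ⟨α, μ, k, hα, hk, hμ, e⟩ := exists_ess_eq_of_isScaledPowPair hD hv hu h₀ h₁
    exact ⟨α, μ, k, hα, hk, hμ, .inr e⟩
  · obtain ⟨α, μ, k, hα, hk, hμ, e⟩ := exists_ess_eq_of_isScaledPowPair hD hu hv h₀.swap h₁.swap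
    exact ⟨α, μ, k, hα, hk, hμ, .inl e⟩

theorem ne_zero_of_isCoprime_of_one_le_max_natDegree {f g : F[X]} (hfg : IsCoprime f g)
    (hD : 1 ≤ max f.natDegree g.natDegree) : f ≠ 0 ∧ g ≠ 0 := by
  constructor <;> rintro rfl
  · simp [natDegree_eq_zero_of_isUnit (isCoprime_zero_left.mp hfg)] at hD
  · simp [natDegree_eq_zero_of_isUnit (isCoprime_zero_right.mp hfg)] at hD

section Radical

variable [DecidableEq F]

theorem natDegree_radical_mul_le (p q : F[X]) :
    (radical (p * q)).natDegree ≤ (radical p).natDegree + (radical q).natDegree := by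
  rw [← natDegree_mul radical_ne_zero radical_ne_zero]
  exact natDegree_le_of_dvd radical_mul_dvd (mul_ne_zero radical_ne_zero radical_ne_zero)

theorem natDegree_radical_prod_le {ι : Type*} (s : Finset ι) (p : ι → F[X]) :
    (radical (∏ i ∈ s, p i)).natDegree ≤ ∑ i ∈ s, (radical (p i)).natDegree := by
  rw [← natDegree_prod _ _ fun i _ => radical_ne_zero]
  exact natDegree_le_of_dvd radical_prod_dvd (prod_ne_zero_iff.mpr fun i _ => radical_ne_zero)

theorem natDegree_radical_pow_le (p : F[X]) (n : ℕ) :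
    (radical (p ^ n)).natDegree ≤ p.natDegree :=
  (natDegree_le_of_dvd radical_pow_dvd radical_ne_zero).trans natDegree_radical_le

theorem natDegree_radical_pow_sub_pow_le {l : ℕ} {f g Ψ : F[X]} {α : F}
    {ι : Type*} (s : Finset ι) (P : ι → F[X]) (r : ι → ℕ)
    (h : PhiH l f g = C α * Ψ ^ l * ∏ i ∈ s, P i ^ r i) :
    (radical (f ^ l - g ^ l)).natDegree ≤
      (f - g).natDegree + Ψ.natDegree + ∑ i ∈ s, (P i).natDegree := by
  rw [← PhiH_mul_sub, h]
  have h₁ := natDegree_radical_mul_le (C α * Ψ ^ l * ∏ i ∈ s, P i ^ r i) (f - g)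
  have h₂ := natDegree_radical_mul_le (C α * Ψ ^ l) (∏ i ∈ s, P i ^ r i)
  have h₃ := natDegree_radical_mul_le (C α) (Ψ ^ l)
  have h₄ : (radical (C α)).natDegree = 0 :=
    Nat.eq_zero_of_le_zero (natDegree_radical_le.trans (natDegree_C α).le)
  have h₅ := (natDegree_radical_prod_le s _).trans
    (sum_le_sum fun i _ => natDegree_radical_pow_le (P i) (r i))
  have h₆ := natDegree_radical_pow_le Ψ l
  have h₇ : (radical (f - g)).natDegree ≤ (f - g).natDegree := natDegree_radical_le
  omega

theorem mul_max_natDegree_add_one_le_natDegree_radical {l : ℕ} {f g : F[X]} (hl : (l : F) ≠ 0)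
    (hfg : IsCoprime f g) (hD : 1 ≤ max f.natDegree g.natDegree)
    (hder : derivative f ≠ 0 ∨ derivative g ≠ 0) :
    l * max f.natDegree g.natDegree + 1 ≤
      (radical (f ^ l - g ^ l)).natDegree + f.natDegree + g.natDegree := by
  obtain ⟨hf, hg⟩ := ne_zero_of_isCoprime_of_one_le_max_natDegree hfg hD
  have hl₀ : l ≠ 0 := by
    rintro rfl
    exact hl Nat.cast_zero
  have hne : g ^ l - f ^ l ≠ 0 := by
    refine sub_ne_zero.mpr fun h => ?_
    have hu : IsUnit (g ^ l) := isCoprime_self.mp (by simpa [h] using hfg.pow (m := l) (n := l))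
    have hf₀ := natDegree_eq_zero_of_isUnit ((isUnit_pow_iff hl₀).mp (h ▸ hu))
    have hg₀ := natDegree_eq_zero_of_isUnit ((isUnit_pow_iff hl₀).mp hu)
    simp [hf₀, hg₀] at hD
  have hrad : (radical (f ^ l * -g ^ l * (g ^ l - f ^ l))).natDegree ≤
      f.natDegree + g.natDegree + (radical (f ^ l - g ^ l)).natDegree := by
    rw [show g ^ l - f ^ l = -(f ^ l - g ^ l) by ring]
    have h₁ := natDegree_radical_mul_le (f ^ l * -g ^ l) (-(f ^ l - g ^ l))
    have h₂ := natDegree_radical_mul_le (f ^ l) (-g ^ l)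
    rw [radical_neg] at h₁ h₂
    have h₃ := natDegree_radical_pow_le f l
    have h₄ := natDegree_radical_pow_le g l
    omega
  have hder_pow : ∀ p : F[X], p ≠ 0 → derivative p ≠ 0 → derivative (p ^ l) ≠ 0 :=
    fun p hp hp' => by
      rw [derivative_pow]
      exact mul_ne_zero (mul_ne_zero (C_ne_zero.mpr hl) (pow_ne_zero _ hp)) hp'
  rcases Polynomial.abc (pow_ne_zero l hf) (neg_ne_zero.mpr (pow_ne_zero l hg)) hne
    hfg.pow.neg_right (by ring) with ⟨ha, hb, -⟩ | ⟨ha, hb, -⟩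
  · rw [natDegree_pow] at ha
    rw [natDegree_neg, natDegree_pow] at hb
    rw [← Nat.mul_max_mul_left]
    omega
  · rcases hder with h | h
    · exact (hder_pow f hf h ha).elim
    · exact (hder_pow g hg h (by rwa [derivative_neg, neg_eq_zero] at hb)).elim

end Radical

theorem natDegree_C_mul_pow_mul_prod_pow {α : F} (hα : α ≠ 0) {Ψ : F[X]} (hΨ : Ψ ≠ 0) (l : ℕ)
    {ι : Type*} (s : Finset ι) {P : ι → F[X]} (hP : ∀ i ∈ s, P i ≠ 0) (r : ι → ℕ) :
    (C α * Ψ ^ l * ∏ i ∈ s, P i ^ r i).natDegree =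
      l * Ψ.natDegree + ∑ i ∈ s, r i * (P i).natDegree := by
  rw [natDegree_mul (by simp [hα, hΨ]) (prod_ne_zero_iff.mpr fun i hi => pow_ne_zero _ (hP i hi)),
    natDegree_C_mul hα, natDegree_pow, natDegree_prod _ _ fun i hi => pow_ne_zero _ (hP i hi)]
  simp only [natDegree_pow]

theorem two_mul_add_one_lt_of_degree_bounds {l n D P S : ℕ} (hl : 4 ≤ l) (hnl : 2 * n + 3 ≤ l)
    (hnS : n ≤ S) (hcount : (l - 1) * D = l * P + S * (l - 1))
    (habc : l * D + 1 ≤ 3 * D + P + n * (l - 1)) : 2 * D + 1 < l := by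
  by_contra! h
  obtain ⟨k, rfl⟩ : ∃ k, l = k + 1 := ⟨l - 1, by omega⟩
  simp only [Nat.add_sub_cancel] at hcount habc
  zify at *
  -- multiply `habc` by `l` and eliminate `P` with `hcount`; then use `k ≤ 2D` and `2n + 2 ≤ k`
  have h₁ := mul_le_mul_of_nonneg_left habc (by positivity : (0 : ℤ) ≤ k + 1)
  have h₂ := mul_le_mul_of_nonneg_left hnS (by positivity : (0 : ℤ) ≤ k)
  have h₃ := mul_le_mul_of_nonneg_left h (by nlinarith : (0 : ℤ) ≤ k * k - 2 * k - 2)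
  have h₄ := mul_le_mul_of_nonneg_left hnl (by positivity : (0 : ℤ) ≤ k * k)
  nlinarith

end

theorem stmt9_general {F : Type*} [Field F] (l : ℕ) (hl : l.Prime)
    (hirr : Irreducible (∑ i ∈ Finset.range l, (X : Polynomial F) ^ i))
    (f g : Polynomial F) (hfg : IsCoprime f g)
    (hθ : 1 ≤ max f.natDegree g.natDegree)
    (α : F) (hα : α ≠ 0) (Ψ : Polynomial F) (hΨ : Ψ ≠ 0)
    (n : ℕ)
    (a b c d : Fin n → F) (hdet : ∀ i, a i * d i - b i * c i ≠ 0)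
    (hed : ∀ i j, i ≠ j →
      EssDistinct (a i) (b i) (c i) (d i) (a j) (b j) (c j) (d j))
    (r : Fin n → ℕ) (hr : ∀ i, 1 ≤ r i)
    (heq : PhiH l f g = C α * Ψ ^ l *
      ∏ i, (PhiH l (C (a i) * X + C (b i)) (C (c i) * X + C (d i))) ^ r i)
    (hder : derivative f ≠ 0 ∨ derivative g ≠ 0)
    (hn2 : 2 ≤ n)
    (hdvd : ∀ i, ∃ m : ℕ, 1 ≤ m ∧ m ≤ l - 1 ∧
      PhiH l (C (a i) * X + C (b i)) (C (c i) * X + C (d i)) ∣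
        f * (C (c i) * X + C (d i)) ^ m - g * (C (a i) * X + C (b i)) ^ m) :
    l ≤ 2 * n + 1 := by
  classical
  by_contra! hlt
  have hodd : l % 2 = 1 := Nat.odd_iff.mp (hl.odd_of_ne_two (by omega))
  have hΦ := geom_sum_ne_zero_of_irreducible (by omega) hirr
  obtain ⟨hf, hg⟩ := ne_zero_of_isCoprime_of_one_le_max_natDegree hfg hθ
  have hP i := natDegree_PhiH_linear hΦ (hdet i)
  have hcount := congrArg natDegree heq
  rw [natDegree_PhiH hΦ hf hg, natDegree_C_mul_pow_mul_prod_pow hα hΨ l univ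
    (fun i _ => ne_zero_of_natDegree_gt (n := 0) (by rw [hP i]; omega)) r] at hcount
  have hrad := natDegree_radical_pow_sub_pow_le univ _ r heq
  simp only [hP, ← sum_mul, sum_const, card_univ, Fintype.card_fin, smul_eq_mul] at hcount hrad
  have habc := mul_max_natDegree_add_one_le_natDegree_radical (by simpa using hΦ 1) hfg hθ hder
  have hsub := natDegree_sub_le f g
  have hS : n ≤ ∑ i, r i := by simpa using sum_le_sum fun i (_ : i ∈ univ) => hr i
  have hlD := two_mul_add_one_lt_of_degree_bounds (by omega) (by omega) hS hcount (by omega)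
  obtain ⟨m₀, -, hm₀, h₀⟩ := hdvd ⟨0, by omega⟩
  obtain ⟨m₁, -, hm₁, h₁⟩ := hdvd ⟨1, by omega⟩
  exact not_essDistinct_of_isScaledPowPair (by omega) (hdet _)
    (isScaledPowPair_of_PhiH_dvd hΦ (hdet _) hfg hm₀ (by omega) h₀)
    (isScaledPowPair_of_PhiH_dvd hΦ (hdet _) hfg hm₁ (by omega) h₁) (hed _ _ (by simp))

theorem stmt9 {F : Type*} [Field F] (l : ℕ) (hl : l.Prime) (hl5 : 5 ≤ l)
    (hirr : Irreducible (∑ i ∈ Finset.range l, (X : Polynomial F) ^ i))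
    (f g : Polynomial F) (hfg : IsCoprime f g)
    (hθ : 1 ≤ max f.natDegree g.natDegree)
    (α : F) (hα : α ≠ 0) (Ψ : Polynomial F) (hΨ : Ψ ≠ 0)
    (n : ℕ) (hn1 : 1 ≤ n)
    (a b c d : Fin n → F) (hdet : ∀ i, a i * d i - b i * c i ≠ 0)
    (hed : ∀ i j, i ≠ j →
      EssDistinct (a i) (b i) (c i) (d i) (a j) (b j) (c j) (d j))
    (r : Fin n → ℕ) (hr : ∀ i, 1 ≤ r i)
    (heq : PhiH l f g = C α * Ψ ^ l *
      ∏ i, (PhiH l (C (a i) * X + C (b i)) (C (c i) * X + C (d i))) ^ r i)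
    (hder : derivative f ≠ 0 ∨ derivative g ≠ 0)
    (hn2 : 2 ≤ n) (hn : 2 * n ≤ l ^ 2 - 4 * l + 1)
    (hdvd : ∀ i, ∃ m : ℕ, 1 ≤ m ∧ m ≤ l - 1 ∧
      PhiH l (C (a i) * X + C (b i)) (C (c i) * X + C (d i)) ∣
        f * (C (c i) * X + C (d i)) ^ m - g * (C (a i) * X + C (b i)) ^ m) :
    l ≤ 2 * n + 1 :=
  stmt9_general l hl hirr f g hfg hθ α hα Ψ hΨ n a b c d hdet hed r hr heq hder hn2 hdvd
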